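/- Let n ≥ 3, 0 < μ < L, Q = L/μ, d ≥ 3, and suppose ((√Q − 1)/√Q)^n (n − 1) > 1. Then for any initial point x_0 ∈ ℝ^d there exist quadratic functions f_1, …, f_n : ℝ^d → ℝ, each L-smooth and μ-strongly convex, all minimized at a common point x* (so the interpolation condition holds, and f = (1/n)Σ f_i is also L-smooth and μ-strongly convex with minimizer x*), such that the ASG method run with α = 1/L, β = (√Q − 1)/(√Q + 1) and cyclically sampled mini-batch gradients g_k = ∇f_{i_k}(y_k), where i_k = 1 + (k mod n) (so the same term is never sampled twice consecutively and each term is sampled with frequency 1/n), satisfies ‖y_k − x*‖ → ∞ as k → ∞. -/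

import Mathlib

open Matrix Filter
open scoped RealInnerProductSpace

/-!
Up to constants, all terms are `μ‖v - x*‖² / 2` with `x* = x₀ - e`, except that `f₁` has curvature
`L` along the unit vector `e`. The iterates then stay on the line `x* + ℝ e`, where the method
becomes a scalar recursion for the `e`-coordinate `u k` of `x k - x*`: the step on `f₁`
(with `α = 1/L`) resets `u` to `0`, and every other step reads
`u (k+2) = q ((1+β) u (k+1) - β u k)` with `q = 1 - 1/Q`. For this `β` the characteristic
polynomial of that recursion is `(z - r)²` with `r = 1 - 1/√Q`, so after a reset `u` follows
`(1 - m) r^m`, and each cycle of `n` steps multiplies it by `ρ = (1 - n) r^n`. The hypothesis says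
`|ρ| > 1`, so the errors grow geometrically.
-/

section Scalar

variable {r β q : ℝ} {n : ℕ}

noncomputable def resetProfile (r : ℝ) (m : ℕ) : ℝ := (1 - m) * r ^ m

-- The resets fall on `k ≡ 1 (mod n)`, where `resetProfile r 1 = 0`.
noncomputable def cyclicProfile (r : ℝ) (n k : ℕ) : ℝ :=
  resetProfile r n ^ (k / n) * resetProfile r (k % n)

theorem resetProfile_zero (r : ℝ) : resetProfile r 0 = 1 := by simp [resetProfile]

theorem resetProfile_one (r : ℝ) : resetProfile r 1 = 0 := by simp [resetProfile]

theorem resetProfile_add_two (r : ℝ) (m : ℕ) :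
    resetProfile r (m + 2) = 2 * r * resetProfile r (m + 1) - r ^ 2 * resetProfile r m := by
  simp only [resetProfile]; push_cast; ring

theorem one_add_mul_resetProfile_succ_sub (hβr : (1 + β) * r = 2 * β) (m : ℕ) :
    (1 + β) * resetProfile r (m + 1) - β * resetProfile r m = -(β * (m + 1) * r ^ m) := by
  simp only [resetProfile]; push_cast
  linear_combination (-(m : ℝ)) * r ^ m * hβr

theorem cyclicProfile_zero (r : ℝ) (n : ℕ) : cyclicProfile r n 0 = 1 := by
  simp [cyclicProfile, resetProfile_zero]

theorem one_lt_abs_resetProfile (hr : 0 ≤ r) (h : 1 < r ^ n * (n - 1)) :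
    1 < |resetProfile r n| := by
  rw [resetProfile, abs_mul, abs_pow, abs_of_nonneg hr]
  nlinarith [neg_le_abs (1 - (n : ℝ)), pow_nonneg hr n]

theorem cyclicProfile_of_mod_eq_one {k : ℕ} (h : k % n = 1) : cyclicProfile r n k = 0 := by
  rw [cyclicProfile, h, resetProfile_one, mul_zero]

theorem cyclicProfile_add_of_le (hn : 0 < n) {k i : ℕ} (h : k % n + i ≤ n) :
    cyclicProfile r n (k + i) = resetProfile r n ^ (k / n) * resetProfile r (k % n + i) := by
  have hk : k + i = (k % n + i) + n * (k / n) := by linarith [Nat.mod_add_div k n]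
  rw [cyclicProfile, hk, Nat.add_mul_div_left _ _ hn, Nat.add_mul_mod_self_left]
  rcases h.lt_or_eq with h | h
  · rw [Nat.div_eq_of_lt h, Nat.mod_eq_of_lt h, zero_add]
  · rw [h, Nat.div_self hn, Nat.mod_self, resetProfile_zero]
    ring

theorem cyclicProfile_add_two (hn : 2 ≤ n) (hq₁ : q * (1 + β) = 2 * r) (hq₂ : q * β = r ^ 2)
    (k : ℕ) : cyclicProfile r n (k + 2) = (if (k + 2) % n = 1 then 0 else q) *
      ((1 + β) * cyclicProfile r n (k + 1) - β * cyclicProfile r n k) := by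
  split_ifs with hreset
  · rw [cyclicProfile_of_mod_eq_one hreset, zero_mul]
  have hk : k % n + 2 ≤ n := by
    by_contra hk
    have hlast : k + 2 = 1 + n * (k / n + 1) := by
      have := Nat.mod_lt k (by omega : 0 < n)
      linarith [Nat.mod_add_div k n]
    rw [hlast, Nat.add_mul_mod_self_left, Nat.mod_eq_of_lt (by omega)] at hreset
    exact hreset rfl
  rw [cyclicProfile_add_of_le (by omega) hk, cyclicProfile_add_of_le (by omega) (by omega),
    cyclicProfile, resetProfile_add_two]
  linear_combination (-(resetProfile r n ^ (k / n) * resetProfile r (k % n + 1))) * hq₁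
    + resetProfile r n ^ (k / n) * resetProfile r (k % n) * hq₂

theorem one_add_mul_cyclicProfile_succ_sub (hn : 0 < n) (hβr : (1 + β) * r = 2 * β) (k : ℕ) :
    (1 + β) * cyclicProfile r n (k + 1) - β * cyclicProfile r n k
      = -(resetProfile r n ^ (k / n) * (β * (k % n + 1 : ℕ) * r ^ (k % n))) := by
  rw [cyclicProfile_add_of_le hn (Nat.mod_lt k hn), cyclicProfile]
  push_cast
  linear_combination resetProfile r n ^ (k / n) * one_add_mul_resetProfile_succ_sub hβr (k % n)

theorem tendsto_abs_one_add_mul_cyclicProfile_succ_sub (hn : 0 < n) (hr₀ : 0 < r) (hr₁ : r < 1)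
    (hβ : 0 < β) (hβr : (1 + β) * r = 2 * β) (hρ : 1 < |resetProfile r n|) :
    Tendsto (fun k => |(1 + β) * cyclicProfile r n (k + 1) - β * cyclicProfile r n k|)
      atTop atTop := by
  have hlower : ∀ k, |resetProfile r n| ^ (k / n) * (β * r ^ n)
      ≤ |(1 + β) * cyclicProfile r n (k + 1) - β * cyclicProfile r n k| := fun k => by
    rw [one_add_mul_cyclicProfile_succ_sub hn hβr, abs_neg, abs_mul, abs_pow,
      abs_of_pos (by positivity : 0 < β * (k % n + 1 : ℕ) * r ^ (k % n))]
    refine mul_le_mul_of_nonneg_left ?_ (by positivity)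
    calc β * r ^ n ≤ β * r ^ (k % n) :=
          mul_le_mul_of_nonneg_left (pow_le_pow_of_le_one hr₀.le hr₁.le (Nat.mod_lt k hn).le) hβ.le
      _ = β * (1 : ℕ) * r ^ (k % n) := by simp
      _ ≤ β * (k % n + 1 : ℕ) * r ^ (k % n) := by gcongr; omega
  have hgrowth := (tendsto_pow_atTop_atTop_of_one_lt hρ).comp (Nat.tendsto_div_const_atTop hn.ne')
  exact tendsto_atTop_mono hlower (hgrowth.atTop_mul_const (by positivity))

theorem critical_momentum_identities {s r β q : ℝ} (hs : 1 < s) (hr : r = (s - 1) / s)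
    (hβ : β = (s - 1) / (s + 1)) (hq : q = 1 - 1 / s ^ 2) :
    q * (1 + β) = 2 * r ∧ q * β = r ^ 2 ∧ (1 + β) * r = 2 * β := by
  subst hr hβ hq
  have hs₀ : s ≠ 0 := by positivity
  have hs₁ : s + 1 ≠ 0 := by positivity
  refine ⟨?_, ?_, ?_⟩ <;> field_simp <;> ring

end Scalar

section Line

variable {E : Type*} [AddCommGroup E] [Module ℝ E] {G : ℕ → E → E} {xstar e : E} {α β : ℝ}
  {κ u : ℕ → ℝ} {x y : ℕ → E}

theorem asg_iterates_mem_line (hG : ∀ k t, G k (xstar + t • e) = (κ k * t) • e)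
    (hu₁ : u 1 = (1 - α * κ 1) * u 0)
    (hu : ∀ k, u (k + 2) = (1 - α * κ (k + 2)) * ((1 + β) * u (k + 1) - β * u k))
    (hx₀ : x 0 = xstar + u 0 • e) (hy₁ : y 1 = x 0)
    (hy : ∀ k, y (k + 2) = x (k + 1) + β • (x (k + 1) - x k))
    (hx : ∀ k, x (k + 1) = y (k + 1) - α • G (k + 1) (y (k + 1))) (k : ℕ) :
    x k = xstar + u k • e := by
  have hstep : ∀ k w, y (k + 1) = xstar + w • e →
      x (k + 1) = xstar + ((1 - α * κ (k + 1)) * w) • e := fun k w hw => by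
    rw [hx, hw, hG]; module
  suffices ∀ k, x k = xstar + u k • e ∧ x (k + 1) = xstar + u (k + 1) • e from (this k).1
  intro k
  induction k with
  | zero => exact ⟨hx₀, by rw [hstep 0 _ (hy₁.trans hx₀), hu₁]⟩
  | succ k ih =>
    refine ⟨ih.2, ?_⟩
    rw [hstep (k + 1) ((1 + β) * u (k + 1) - β * u k) (by rw [hy, ih.1, ih.2]; module), hu]

theorem asg_extrapolation_mem_line (hline : ∀ k, x k = xstar + u k • e)
    (hy : ∀ k, y (k + 2) = x (k + 1) + β • (x (k + 1) - x k)) (k : ℕ) :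
    y (k + 2) - xstar = ((1 + β) * u (k + 1) - β * u k) • e := by
  rw [hy, hline, hline]; module

end Line

section Quadratic

variable {E : Type*} [NormedAddCommGroup E] [InnerProductSpace ℝ E]

noncomputable def quadraticFunction (T : E →ₗ[ℝ] E) (b : E) (c : ℝ) (v : E) : ℝ :=
  (1 / 2) * ⟪v, T v⟫ - ⟪b, v⟫ + c

theorem hasGradientAt_quadraticFunction [FiniteDimensional ℝ E] {T : E →ₗ[ℝ] E}
    (hT : T.IsSymmetric) (b : E) (c : ℝ) (p : E) :
    HasGradientAt (quadraticFunction T b c) (T p - b) p := by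
  rw [hasGradientAt_iff_hasFDerivAt]
  have hT' : HasFDerivAt T (LinearMap.toContinuousLinearMap T) p :=
    (LinearMap.toContinuousLinearMap T).hasFDerivAt
  refine ((((hasFDerivAt_id p).inner ℝ hT').const_mul (1 / 2)).sub
    (innerSL ℝ b).hasFDerivAt |>.add_const c).congr_fderiv ?_
  ext w
  simp only [one_div, id_eq, _root_.sub_apply, _root_.smul_apply,
    ContinuousLinearMap.comp_apply, ContinuousLinearMap.prod_apply, ContinuousLinearMap.id_apply,
    LinearMap.coe_toContinuousLinearMap', fderivInnerCLM_apply, smul_eq_mul, coe_innerSL_apply,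
    real_inner_comm w, map_sub, InnerProductSpace.toDual_apply_apply, sub_left_inj]
  rw [real_inner_comm (T w) p, hT w p]
  ring

theorem quadraticFunction_le {T : E →ₗ[ℝ] E} (hT : T.IsPositive) (c : ℝ) (xstar v : E) :
    quadraticFunction T (T xstar) c xstar ≤ quadraticFunction T (T xstar) c v := by
  have hcentered : quadraticFunction T (T xstar) c v
      = quadraticFunction T (T xstar) c xstar + (1 / 2) * ⟪v - xstar, T (v - xstar)⟫ := by
    simp only [quadraticFunction, map_sub, inner_sub_left, inner_sub_right]
    rw [real_inner_comm (T xstar) v, ← hT.isSymmetric xstar v, real_inner_comm xstar (T xstar)]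
    ring
  have hnonneg : 0 ≤ ⟪v - xstar, T (v - xstar)⟫ := hT.re_inner_nonneg_right (v - xstar)
  linarith

theorem gradient_quadraticFunction_add_smul [FiniteDimensional ℝ E] {T : E →ₗ[ℝ] E}
    (hT : T.IsSymmetric) (c : ℝ) (xstar v : E) (t : ℝ) :
    gradient (quadraticFunction T (T xstar) c) (xstar + t • v) = t • T v := by
  rw [(hasGradientAt_quadraticFunction hT _ c _).gradient, map_add, map_smul, add_sub_cancel_left]

end Quadratic

theorem update_const_apply_mem {ι α : Type*} [DecidableEq ι] {s : Set α} {a b : α} (ha : a ∈ s)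
    (hb : b ∈ s) (j₀ j : ι) : Function.update (fun _ => a) j₀ b j ∈ s := by
  rw [Function.update_apply]; split_ifs <;> assumption

section Spike

variable {ι : Type*} [Fintype ι] [DecidableEq ι]

noncomputable def spikeHessian (μ κ : ℝ) (j₀ : ι) : Matrix ι ι ℝ :=
  diagonal (Function.update (fun _ => μ) j₀ κ)

theorem spectrum_spikeHessian_subset {μ κ : ℝ} {s : Set ℝ} (hμ : μ ∈ s) (hκ : κ ∈ s) (j₀ : ι) :
    spectrum ℝ (spikeHessian μ κ j₀) ⊆ s := by
  rw [spikeHessian, spectrum_diagonal, Set.range_subset_iff]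
  exact update_const_apply_mem hμ hκ j₀

theorem isPositive_toEuclideanLin_spikeHessian {μ κ : ℝ} (hμ : 0 ≤ μ) (hκ : 0 ≤ κ) (j₀ : ι) :
    (toEuclideanLin (spikeHessian μ κ j₀)).IsPositive :=
  isPositive_toEuclideanLin_iff.mpr <| PosSemidef.diagonal fun j =>
    Set.mem_Ici.1 (update_const_apply_mem (Set.mem_Ici.2 hμ) (Set.mem_Ici.2 hκ) j₀ j)

theorem toEuclideanLin_spikeHessian_single (μ κ : ℝ) (j₀ : ι) (a : ℝ) :
    toEuclideanLin (spikeHessian μ κ j₀) (EuclideanSpace.single j₀ a)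
      = κ • EuclideanSpace.single j₀ a := by
  ext i
  simp [spikeHessian, toLpLin_apply, mul_comm]

end Spike

theorem tendsto_norm_asg_sub_of_cyclic_reset {E : Type*} [NormedAddCommGroup E] [NormedSpace ℝ E]
    {n : ℕ} (hn : 2 ≤ n) {s α β : ℝ} (hs : 1 < s) (hβ : β = (s - 1) / (s + 1))
    (hdiv : 1 < ((s - 1) / s) ^ n * ((n : ℝ) - 1))
    {G : ℕ → E → E} {κ : ℕ → ℝ} {xstar e : E} (he : ‖e‖ = 1)
    (hG : ∀ k t, G k (xstar + t • e) = (κ k * t) • e)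
    (hκ : ∀ k, 1 - α * κ k = if k % n = 1 then 0 else 1 - 1 / s ^ 2)
    {x y : ℕ → E} (hx₀ : x 0 = xstar + e) (hy₁ : y 1 = x 0)
    (hy : ∀ k, y (k + 2) = x (k + 1) + β • (x (k + 1) - x k))
    (hx : ∀ k, x (k + 1) = y (k + 1) - α • G (k + 1) (y (k + 1))) :
    Tendsto (fun k => ‖y k - xstar‖) atTop atTop := by
  set r := (s - 1) / s with hr
  obtain ⟨hq₁, hq₂, hβr⟩ := critical_momentum_identities hs hr hβ rfl
  have hr₀ : 0 < r := div_pos (by linarith) (by linarith)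
  have hr₁ : r < 1 := (div_lt_one (by linarith)).2 (by linarith)
  have hβ₀ : 0 < β := hβ ▸ div_pos (by linarith) (by linarith)
  have hfirst : (1 : ℕ) % n = 1 := Nat.mod_eq_of_lt hn
  have hline := asg_iterates_mem_line (u := cyclicProfile r n) hG
    (by rw [hκ, if_pos hfirst, zero_mul, cyclicProfile_of_mod_eq_one hfirst])
    (fun k => by rw [hκ]; exact cyclicProfile_add_two hn hq₁ hq₂ k)
    (by rw [hx₀, cyclicProfile_zero, one_smul]) hy₁ hy hx
  rw [← tendsto_add_atTop_iff_nat 2]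
  refine (tendsto_abs_one_add_mul_cyclicProfile_succ_sub (by omega) hr₀ hr₁ hβ₀ hβr
    (one_lt_abs_resetProfile hr₀.le hdiv)).congr fun k => ?_
  rw [asg_extrapolation_mem_line hline hy, norm_smul, he, mul_one, Real.norm_eq_abs]

theorem stmt3 (d n : ℕ) (hd : 3 ≤ d) (hn : 3 ≤ n)
    (μ L : ℝ) (hμ : 0 < μ) (hμL : μ < L)
    (Q : ℝ) (hQ : Q = L / μ)
    (hdiv : 1 < ((Real.sqrt Q - 1) / Real.sqrt Q) ^ n * ((n : ℝ) - 1))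
    (α β : ℝ) (hα : α = 1 / L) (hβ : β = (Real.sqrt Q - 1) / (Real.sqrt Q + 1))
    (x0 : EuclideanSpace ℝ (Fin d)) :
    ∃ (H : Fin n → Matrix (Fin d) (Fin d) ℝ) (b : Fin n → EuclideanSpace ℝ (Fin d))
      (c : Fin n → ℝ) (f : Fin n → EuclideanSpace ℝ (Fin d) → ℝ)
      (xstar : EuclideanSpace ℝ (Fin d)),
      (∀ i, (H i).IsSymm) ∧
      (∀ i, spectrum ℝ (H i) ⊆ Set.Icc μ L) ∧
      (∀ i v, f i v = (1 / 2) * ⟪v, Matrix.toEuclideanLin (H i) v⟫ - ⟪b i, v⟫ + c i) ∧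
      (∀ i v, f i xstar ≤ f i v) ∧
      ∀ x y : ℕ → EuclideanSpace ℝ (Fin d),
        x 0 = x0 →
        y 1 = x 0 →
        (∀ k, y (k + 2) = x (k + 1) + β • (x (k + 1) - x k)) →
        (∀ k, x (k + 1) = y (k + 1) -
          α • gradient (f ⟨(k + 1) % n, Nat.mod_lt _ (by omega)⟩) (y (k + 1))) →
        Tendsto (fun k => ‖y k - xstar‖) atTop atTop := by
  have hL : 0 < L := hμ.trans hμL
  have hs : 1 < Real.sqrt Q := by
    rw [hQ, Real.lt_sqrt zero_le_one, one_pow, one_lt_div hμ]; exact hμL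
  have hμ_step : 1 - α * μ = 1 - 1 / Real.sqrt Q ^ 2 := by
    rw [Real.sq_sqrt (hQ ▸ div_pos hL hμ).le, hQ, hα, one_div_div]; field_simp
  have hL_step : 1 - α * L = 0 := by rw [hα, one_div_mul_cancel hL.ne', sub_self]
  let j₀ : Fin d := ⟨0, by omega⟩
  let e : EuclideanSpace ℝ (Fin d) := EuclideanSpace.single j₀ 1
  let κ : ℕ → ℝ := fun i => if i = 1 then L else μ
  have hκ : ∀ i, κ i ∈ Set.Icc μ L := fun i => by
    simp only [κ]; split_ifs <;> constructor <;> linarith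
  let T : ℕ → EuclideanSpace ℝ (Fin d) →ₗ[ℝ] EuclideanSpace ℝ (Fin d) := fun i =>
    toEuclideanLin (spikeHessian μ (κ i) j₀)
  have hT : ∀ i, (T i).IsPositive := fun i =>
    isPositive_toEuclideanLin_spikeHessian hμ.le (hμ.le.trans (hκ i).1) j₀
  let f : ℕ → EuclideanSpace ℝ (Fin d) → ℝ := fun i => quadraticFunction (T i) (T i (x0 - e)) 0
  refine ⟨fun i => spikeHessian μ (κ i) j₀, fun i => T i (x0 - e), 0, fun i => f i, x0 - e,
    fun i => isSymm_diagonal _,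
    fun i => spectrum_spikeHessian_subset (Set.left_mem_Icc.2 hμL.le) (hκ i) j₀,
    fun _ _ => rfl, fun i => quadraticFunction_le (hT i) 0 (x0 - e), ?_⟩
  intro x y hx₀ hy₁ hy hx
  refine tendsto_norm_asg_sub_of_cyclic_reset (G := fun k => gradient (f (k % n)))
    (κ := fun k => κ (k % n)) (xstar := x0 - e) (e := e) (by omega) hs hβ hdiv (by simp [e])
    (fun k t => ?_) (fun k => ?_) (by rw [hx₀, sub_add_cancel]) hy₁ hy hx
  · rw [gradient_quadraticFunction_add_smul (hT _).isSymmetric, toEuclideanLin_spikeHessian_single,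
      smul_smul, mul_comm]
  · simp only [κ]
    split_ifs <;> simp [hμ_step, hL_step]
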